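/- Let H_d: d1(X³+Y³+Z³) = 3d0·XYZ and H_{d'}: d1'(X³+Y³+Z³) = 3d0'·XYZ be cubics, and let (x:y:z) ∈ H_d, (x':y':z') ∈ H_{d'}. Then the Segre coordinates (x0,...,x8) = (xx',xy',xz',yx',yy',yz',zx',zy',zz') satisfy the four cubic equations F1 = F2 = F3 = F4 = 0 of the abelian surface in Hesse form with coefficient vector d = (d0d0' : d0d1' : d1d0' : d1d1' : d1d1'), where F1 = d1·Σx_i³ − 3d0·(x0x1x2+x3x4x5+x6x7x8) with (d0,d1) replaced by (d0d0', d0d1'), and similarly for F2, F3, F4 with coefficients d1d0', d1d1', d1d1' respectively (as in Gunji's equations). -/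
import Mathlib


/-- The Segre image of a point on a product of Hesse curves. -/
def segreVec {R : Type*} [CommRing R] (x y z x' y' z' : R) : Fin 9 → R :=
  ![x*x', x*y', x*z', y*x', y*y', y*z', z*x', z*y', z*z']

/-- Gunji's four cubic polynomials with coefficient vector d = (d 0, ..., d 4). -/
def gunjiCubic {R : Type*} [CommRing R] (d : Fin 5 → R) (v : Fin 9 → R) : Fin 4 → R :=
  ![d 1 * (∑ j : Fin 9, v j ^ 3) - 3 * d 0 * (v 0*v 1*v 2 + v 3*v 4*v 5 + v 6*v 7*v 8),
    d 2 * (∑ j : Fin 9, v j ^ 3) - 3 * d 0 * (v 0*v 3*v 6 + v 1*v 4*v 7 + v 2*v 5*v 8),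
    d 3 * (∑ j : Fin 9, v j ^ 3) - 3 * d 0 * (v 0*v 4*v 8 + v 1*v 5*v 6 + v 2*v 3*v 7),
    d 4 * (∑ j : Fin 9, v j ^ 3) - 3 * d 0 * (v 0*v 5*v 7 + v 1*v 3*v 8 + v 2*v 4*v 6)]

/-- The Segre coordinates of a pair of points on Hesse curves H_{(d0:d1)} and
H_{(d0':d1')} satisfy Gunji's four cubic equations with coefficient vector
(d0d0' : d0d1' : d1d0' : d1d1' : d1d1'). -/
theorem segre_satisfies_gunji_cubics {R : Type*} [CommRing R]
    (d0 d1 d0' d1' x y z x' y' z' : R)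
    (h : d1 * (x^3 + y^3 + z^3) = 3 * d0 * (x*y*z))
    (h' : d1' * (x'^3 + y'^3 + z'^3) = 3 * d0' * (x'*y'*z')) :
    ∀ i : Fin 4,
      gunjiCubic ![d0*d0', d0*d1', d1*d0', d1*d1', d1*d1']
        (segreVec x y z x' y' z') i = 0 := by
  have hs : (∑ j : Fin 9, segreVec x y z x' y' z' j ^ 3)
      = (x ^ 3 + y ^ 3 + z ^ 3) * (x' ^ 3 + y' ^ 3 + z' ^ 3) := by
    simp only [segreVec, Fin.sum_univ_succ, Fin.sum_univ_zero, Matrix.cons_val_zero,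
      Matrix.cons_val_succ]
    ring
  intro i
  fin_cases i
  · show d0 * d1' * (∑ j : Fin 9, segreVec x y z x' y' z' j ^ 3)
        - 3 * (d0 * d0') * ((x*x')*(x*y')*(x*z') + (y*x')*(y*y')*(y*z')
          + (z*x')*(z*y')*(z*z')) = 0
    rw [hs]
    linear_combination (d0 * (x ^ 3 + y ^ 3 + z ^ 3)) * h'
  · show d1 * d0' * (∑ j : Fin 9, segreVec x y z x' y' z' j ^ 3)
        - 3 * (d0 * d0') * ((x*x')*(y*x')*(z*x') + (x*y')*(y*y')*(z*y')
          + (x*z')*(y*z')*(z*z')) = 0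
    rw [hs]
    linear_combination (d0' * (x' ^ 3 + y' ^ 3 + z' ^ 3)) * h
  · show d1 * d1' * (∑ j : Fin 9, segreVec x y z x' y' z' j ^ 3)
        - 3 * (d0 * d0') * ((x*x')*(y*y')*(z*z') + (x*y')*(y*z')*(z*x')
          + (x*z')*(y*x')*(z*y')) = 0
    rw [hs]
    linear_combination (d1' * (x' ^ 3 + y' ^ 3 + z' ^ 3)) * h + (3 * d0 * (x * y * z)) * h'
  · show d1 * d1' * (∑ j : Fin 9, segreVec x y z x' y' z' j ^ 3)
        - 3 * (d0 * d0') * ((x*x')*(y*z')*(z*y') + (x*y')*(y*x')*(z*z')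
          + (x*z')*(y*y')*(z*x')) = 0
    rw [hs]
    linear_combination (d1' * (x' ^ 3 + y' ^ 3 + z' ^ 3)) * h + (3 * d0 * (x * y * z)) * h'
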